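/- Let G be a connected graph on m ≥ 2 vertices and H a κ-regular graph on n vertices. If QEC(G) = 0 and min ev(A_H) ≥ −2, then QEC(G⊙H) = 0; also, if QEC(G) ≤ 0 and min ev(A_H) = −2, then QEC(G⊙H) = 0. -/

import Mathlib

/-!
In the corona, `d((u,a),(v,b)) = d_G(u,v) + φ(a) + φ(b) - [u = v] (A_H + 2I)(a,b)`, where `φ` is
`0` on the base vertex `none` and `1` on the vertices of `H`, and `A_H + 2I` is bordered by zeros.
On vectors `F` with `∑ F = 0` the two rank-one terms vanish, so
`⟨F, D F⟩ = ⟨c, D_G c⟩ - ∑_u ⟨F_u, (A_H + 2I) F_u⟩`, with `c` the fibre sums of `F` and `F_u` its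
restriction to the `u`-th copy of `H`. Either alternative of the hypothesis gives `QEC(G) ≤ 0` and
`A_H + 2I ⪰ 0`, so `QEC(G ⊙ H) ≤ 0`. For the reverse inequality, either every test vector of `G`
placed on the base is a test vector of `G ⊙ H` with the same value, so `0 = QEC(G) ≤ QEC(G ⊙ H)`;
or a `-2`-eigenvector of `A_H`, which sums to zero since it is orthogonal to the eigenvector `1` of
the regular graph `H`, placed on a single copy of `H` has value `0`.
-/

open Matrix BigOperators

/-- The join `K₁ + H` of a single vertex (labelled `none`) with `H`. -/
def joinOne {V₂ : Type*} (H : SimpleGraph V₂) : SimpleGraph (Option V₂) where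
  Adj i j := (∃ a b, i = some a ∧ j = some b ∧ H.Adj a b) ∨
    (i = none ∧ j ≠ none) ∨ (i ≠ none ∧ j = none)
  symm := by
    constructor
    rintro i j (⟨a, b, ha, hb, hab⟩ | ⟨h1, h2⟩ | ⟨h1, h2⟩)
    · exact Or.inl ⟨b, a, hb, ha, hab.symm⟩
    · exact Or.inr (Or.inr ⟨h2, h1⟩)
    · exact Or.inr (Or.inl ⟨h2, h1⟩)
  loopless := by
    constructor
    rintro i (⟨a, b, ha, hb, hab⟩ | ⟨h1, h2⟩ | ⟨h1, h2⟩)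
    · rw [ha] at hb; injection hb with h; subst h; exact H.irrefl hab
    · exact h2 h1
    · exact h1 h2

/-- The corona graph `G ⊙ H`, on vertex set `V₁ × ({o} ∪ V₂)` with `o = none`. -/
def corona {V₁ V₂ : Type*} (G : SimpleGraph V₁) (H : SimpleGraph V₂) :
    SimpleGraph (V₁ × Option V₂) where
  Adj p q := (p.2 = none ∧ q.2 = none ∧ G.Adj p.1 q.1) ∨
    (p.1 = q.1 ∧ (joinOne H).Adj p.2 q.2)
  symm := by
    constructor
    rintro p q (⟨h1, h2, h3⟩ | ⟨h1, h2⟩)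
    · exact Or.inl ⟨h2, h1, h3.symm⟩
    · exact Or.inr ⟨h1.symm, h2.symm⟩
  loopless := by
    constructor
    rintro p (⟨_, _, h⟩ | ⟨_, h⟩)
    · exact G.irrefl h
    · exact (joinOne H).irrefl h

noncomputable def distMatrix {V : Type*} (G : SimpleGraph V) : Matrix V V ℝ :=
  fun x y => (G.dist x y : ℝ)

/-- The quadratic embedding constant of a graph:
`QEC(G) = max {⟨f, D f⟩ : ⟨f,f⟩ = 1, ⟨1,f⟩ = 0}`. -/
noncomputable def QEC {V : Type*} [Fintype V] (G : SimpleGraph V) : ℝ :=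
  sSup {r : ℝ | ∃ f : V → ℝ, (∑ x, f x * f x) = 1 ∧ (∑ x, f x) = 0 ∧
    r = f ⬝ᵥ (distMatrix G).mulVec f}

open scoped Kronecker

namespace SimpleGraph

variable {V : Type*} {G : SimpleGraph V}

lemma Walk.le_length_of_le_add_one_of_adj (d : V → V → ℕ) (hd_self : ∀ p, d p p = 0)
    (hd_adj : ∀ p p' q, G.Adj p p' → d p q ≤ d p' q + 1) {p q : V} (w : G.Walk p q) :
    d p q ≤ w.length := by
  induction w with
  | nil => simp [hd_self]
  | cons h _ ih => simpa using (hd_adj _ _ _ h).trans (Nat.add_le_add_right ih 1)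

lemma dist_eq_of_le_add_one_of_adj (d : V → V → ℕ) (hd_self : ∀ p, d p p = 0)
    (hd_adj : ∀ p p' q, G.Adj p p' → d p q ≤ d p' q + 1)
    (hwalk : ∀ p q, ∃ w : G.Walk p q, w.length ≤ d p q) (p q : V) :
    G.dist p q = d p q := by
  obtain ⟨w, hw⟩ := hwalk p q
  obtain ⟨w', hw'⟩ := Reachable.exists_walk_length_eq_dist ⟨w⟩
  exact le_antisymm ((dist_le w).trans hw)
    (hw' ▸ w'.le_length_of_le_add_one_of_adj d hd_self hd_adj)

lemma IsRegularOfDegree.sum_eq_zero_of_adjMatrix_mulVec_eq_smul [Fintype V] [DecidableRel G.Adj]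
    {κ : ℕ} (hreg : G.IsRegularOfDegree κ) {θ : ℝ} (hθ : θ ≠ κ) {x : V → ℝ}
    (hx : G.adjMatrix ℝ *ᵥ x = θ • x) : ∑ i, x i = 0 := by
  have hrow : (1 : V → ℝ) ᵥ* G.adjMatrix ℝ = fun _ => (κ : ℝ) := by
    ext v
    simp [hreg v]
  have h := dotProduct_mulVec 1 (G.adjMatrix ℝ) x
  rw [hx, hrow, dotProduct_smul, one_dotProduct, smul_eq_mul, dotProduct, ← Finset.mul_sum,
    ← sub_eq_zero, ← sub_mul] at h
  exact (mul_eq_zero.mp h).resolve_left (sub_ne_zero.mpr hθ)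

end SimpleGraph

namespace Matrix

variable {ι κ R : Type*} [Fintype ι] [Fintype κ] [CommSemiring R]

lemma dotProduct_vecMulVec_mulVec (F u v G : ι → R) :
    F ⬝ᵥ vecMulVec u v *ᵥ G = (F ⬝ᵥ u) * (v ⬝ᵥ G) := by
  rw [vecMulVec_mulVec, op_smul_eq_smul, dotProduct_smul, smul_eq_mul, mul_comm]

lemma dotProduct_submatrix_fst_mulVec (A : Matrix ι ι R) (F : ι × κ → R) :
    F ⬝ᵥ A.submatrix Prod.fst Prod.fst *ᵥ F =
      (fun i => ∑ k, F (i, k)) ⬝ᵥ A *ᵥ fun i => ∑ k, F (i, k) := by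
  simp only [dotProduct, mulVec, submatrix_apply, Fintype.sum_prod_type, Finset.sum_mul,
    Finset.mul_sum]
  refine Finset.sum_congr rfl fun i _ => ?_
  rw [Finset.sum_comm]
  refine Finset.sum_congr rfl fun j _ => ?_
  rw [Finset.sum_comm]

lemma dotProduct_one_kronecker_mulVec [DecidableEq ι] (B : Matrix κ κ R) (F : ι × κ → R) :
    F ⬝ᵥ (1 ⊗ₖ B) *ᵥ F = ∑ i, (fun k => F (i, k)) ⬝ᵥ B *ᵥ fun k => F (i, k) := by
  simp [dotProduct, mulVec, Fintype.sum_prod_type, one_apply, Finset.mul_sum]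

def zeroBorder (M : Matrix κ κ R) : Matrix (Option κ) (Option κ) R :=
  of fun a b => match a, b with
    | some i, some j => M i j
    | _, _ => 0

lemma dotProduct_zeroBorder_mulVec (M : Matrix κ κ R) (x : Option κ → R) :
    x ⬝ᵥ M.zeroBorder *ᵥ x = (x ∘ some) ⬝ᵥ M *ᵥ (x ∘ some) := by
  simp [dotProduct, mulVec, Fintype.sum_option, zeroBorder]

lemma dotProduct_mulVec_le_sum_abs (A : Matrix ι ι ℝ) {f : ι → ℝ} (hf : f ⬝ᵥ f = 1) :
    f ⬝ᵥ A *ᵥ f ≤ ∑ i, ∑ j, |A i j| := by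
  have hf_le (i : ι) : |f i| ≤ 1 := abs_le_one_iff_mul_self_le_one.mpr <| hf ▸
    Finset.single_le_sum (f := fun j => f j * f j) (fun j _ => mul_self_nonneg _)
      (Finset.mem_univ i)
  simp only [dotProduct, mulVec, Finset.mul_sum]
  refine Finset.sum_le_sum fun i _ => Finset.sum_le_sum fun j _ => ?_
  calc f i * (A i j * f j) ≤ |f i * (A i j * f j)| := le_abs_self _
    _ = |A i j| * (|f i| * |f j|) := by rw [abs_mul, abs_mul]; ring
    _ ≤ |A i j| * (1 * 1) := by gcongr <;> exact hf_le _
    _ = |A i j| := by ring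

lemma IsHermitian.posSemidef_add_smul_one [DecidableEq ι] {A : Matrix ι ι ℝ} (hA : A.IsHermitian)
    {t : ℝ} (h : ∀ θ : ℝ, (∃ x : ι → ℝ, x ≠ 0 ∧ A *ᵥ x = θ • x) → -t ≤ θ) :
    (A + t • 1).PosSemidef := by
  have hB : (A + t • 1).IsHermitian := hA.add (isHermitian_one.smul (IsSelfAdjoint.all t))
  rw [hB.posSemidef_iff_eigenvalues_nonneg]
  intro i
  have hv0 : ⇑(hB.eigenvectorBasis i) ≠ 0 :=
    (WithLp.ofLp_eq_zero 2).ne.2 <| hB.eigenvectorBasis.orthonormal.ne_zero i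
  have hv := hB.mulVec_eigenvectorBasis i
  rw [add_mulVec, smul_mulVec, one_mulVec, ← eq_sub_iff_add_eq, ← sub_smul] at hv
  simpa using h _ ⟨_, hv0, hv⟩

end Matrix

section QEC

variable {V : Type*} [Fintype V] (G : SimpleGraph V)

def qecValues : Set ℝ :=
  {r : ℝ | ∃ f : V → ℝ, (∑ x, f x * f x) = 1 ∧ (∑ x, f x) = 0 ∧
    r = f ⬝ᵥ (distMatrix G).mulVec f}

lemma bddAbove_qecValues : BddAbove (qecValues G) :=
  ⟨_, by rintro _ ⟨f, hf, -, rfl⟩; exact (distMatrix G).dotProduct_mulVec_le_sum_abs hf⟩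

lemma div_mem_qecValues {c : V → ℝ} (hc0 : c ≠ 0) (hc : ∑ u, c u = 0) :
    c ⬝ᵥ distMatrix G *ᵥ c / (c ⬝ᵥ c) ∈ qecValues G := by
  have hpos : 0 < c ⬝ᵥ c := by simpa using dotProduct_self_star_pos_iff.mpr hc0
  set s := (√(c ⬝ᵥ c))⁻¹
  have hs : s * s = (c ⬝ᵥ c)⁻¹ := by rw [← mul_inv, Real.mul_self_sqrt hpos.le]
  refine ⟨s • c, ?_, ?_, ?_⟩
  · change (s • c) ⬝ᵥ (s • c) = 1
    rw [smul_dotProduct, dotProduct_smul, smul_smul, smul_eq_mul, hs, inv_mul_cancel₀ hpos.ne']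
  · simp [← Finset.mul_sum, hc]
  · rw [mulVec_smul, smul_dotProduct, dotProduct_smul, smul_smul, smul_eq_mul, hs,
      div_eq_inv_mul]

lemma dotProduct_mulVec_le_qec_mul {c : V → ℝ} (hc : ∑ u, c u = 0) :
    c ⬝ᵥ distMatrix G *ᵥ c ≤ QEC G * (c ⬝ᵥ c) := by
  rcases eq_or_ne c 0 with rfl | hc0
  · simp
  have hpos : 0 < c ⬝ᵥ c := by simpa using dotProduct_self_star_pos_iff.mpr hc0
  rw [← div_le_iff₀ hpos]
  exact le_csSup (bddAbove_qecValues G) (div_mem_qecValues G hc0 hc)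

lemma qecValues_nonempty [Nontrivial V] : (qecValues G).Nonempty := by
  classical
  obtain ⟨u, v, huv⟩ := exists_pair_ne V
  have hc0 : Pi.single u 1 - Pi.single v 1 ≠ (0 : V → ℝ) := by
    intro h
    simpa [huv] using congrFun h u
  exact ⟨_, div_mem_qecValues G hc0 (by simp [Finset.sum_sub_distrib])⟩

end QEC

namespace Corona

variable {V₁ V₂ : Type*} (G : SimpleGraph V₁) (H : SimpleGraph V₂)

lemma adj_base {u v : V₁} (h : G.Adj u v) : (corona G H).Adj (u, none) (v, none) :=
  Or.inl ⟨rfl, rfl, h⟩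

lemma adj_spoke (u : V₁) (i : V₂) : (corona G H).Adj (u, none) (u, some i) :=
  Or.inr ⟨rfl, Or.inr (Or.inl ⟨rfl, by simp⟩)⟩

lemma adj_copy (u : V₁) {i j : V₂} (h : H.Adj i j) :
    (corona G H).Adj (u, some i) (u, some j) :=
  Or.inr ⟨rfl, Or.inl ⟨i, j, rfl, rfl, h⟩⟩

def baseHom : G →g corona G H where
  toFun u := (u, none)
  map_rel' := adj_base G H

def level (p : V₁ × Option V₂) : ℝ := p.2.elim 0 fun _ => 1

variable [DecidableEq V₁] [DecidableEq V₂] [DecidableRel H.Adj]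

noncomputable def dist : V₁ × Option V₂ → V₁ × Option V₂ → ℕ
  | (u, none), (v, none) => G.dist u v
  | (u, none), (v, some _) | (u, some _), (v, none) => G.dist u v + 1
  | (u, some i), (v, some j) =>
    if u = v then (if i = j then 0 else if H.Adj i j then 1 else 2) else G.dist u v + 2

lemma dist_self (p : V₁ × Option V₂) : dist G H p p = 0 := by
  rcases p with ⟨u, _ | i⟩ <;> simp [dist]

lemma dist_le_dist_add_one_of_adj (hG : G.Connected) {p p' : V₁ × Option V₂}
    (q : V₁ × Option V₂) (h : (corona G H).Adj p p') : dist G H p q ≤ dist G H p' q + 1 := by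
  rcases p with ⟨u, a⟩
  rcases p' with ⟨u', a'⟩
  rcases q with ⟨v, b⟩
  rcases h with ⟨rfl, rfl, hG'⟩ | ⟨rfl, hJ⟩
  · have := hG.dist_triangle (u := u) (v := u') (w := v)
    rw [SimpleGraph.dist_eq_one_iff_adj.mpr hG'] at this
    rcases b with _ | j <;> simp only [dist] <;> omega
  · rcases a with _ | i <;> rcases a' with _ | i' <;> rcases b with _ | j <;>
      simp only [joinOne, dist] at hJ ⊢ <;> grind [H.adj_comm, H.irrefl]

lemma exists_walk_length_le_dist (hG : G.Connected) (p q : V₁ × Option V₂) :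
    ∃ w : (corona G H).Walk p q, w.length ≤ dist G H p q := by
  rcases p with ⟨u, a⟩
  rcases q with ⟨v, b⟩
  obtain ⟨W, hW⟩ := hG.exists_walk_length_eq_dist u v
  set W' : (corona G H).Walk (u, none) (v, none) := W.map (baseHom G H)
  have hW' : W'.length = G.dist u v := (W.length_map _).trans hW
  rcases a with _ | i <;> rcases b with _ | j
  · exact ⟨W', hW'.le⟩
  · exact ⟨W'.concat (adj_spoke G H v j), by simp [dist, hW']⟩
  · exact ⟨.cons (adj_spoke G H u i).symm W', by simp [dist, hW']⟩
  by_cases hcopy : u = v ∧ (i = j ∨ H.Adj i j)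
  · obtain ⟨rfl, rfl | hA⟩ := hcopy
    · exact ⟨.nil, by simp⟩
    · exact ⟨.cons (adj_copy G H u hA) .nil, by simp [dist, hA.ne, hA]⟩
  refine ⟨.cons (adj_spoke G H u i).symm (W'.concat (adj_spoke G H v j)), ?_⟩
  simp only [dist, SimpleGraph.Walk.length_cons, SimpleGraph.Walk.length_concat, hW']
  split_ifs <;> simp_all

lemma dist_corona (hG : G.Connected) (p q : V₁ × Option V₂) :
    (corona G H).dist p q = dist G H p q :=
  SimpleGraph.dist_eq_of_le_add_one_of_adj _ (dist_self G H)
    (fun _ _ q h => dist_le_dist_add_one_of_adj G H hG q h) (exists_walk_length_le_dist G H hG)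
    p q

lemma distMatrix_corona (hG : G.Connected) :
    distMatrix (corona G H) = (distMatrix G).submatrix Prod.fst Prod.fst
      + vecMulVec level 1 + vecMulVec 1 level
      - 1 ⊗ₖ (H.adjMatrix ℝ + (2 : ℝ) • 1).zeroBorder := by
  ext ⟨u, a⟩ ⟨v, b⟩
  simp only [distMatrix, dist_corona G H hG]
  rcases a with _ | i <;> rcases b with _ | j <;>
    simp [dist, level, zeroBorder, one_apply, distMatrix]
  split_ifs <;> simp_all <;> ring

lemma dotProduct_distMatrix_corona_mulVec [Fintype V₁] [Fintype V₂] (hG : G.Connected)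
    {F : V₁ × Option V₂ → ℝ} (hF : ∑ p, F p = 0) :
    F ⬝ᵥ distMatrix (corona G H) *ᵥ F =
      (fun u => ∑ a, F (u, a)) ⬝ᵥ distMatrix G *ᵥ (fun u => ∑ a, F (u, a)) -
        ∑ u, (fun i => F (u, some i)) ⬝ᵥ (H.adjMatrix ℝ + (2 : ℝ) • 1) *ᵥ
          fun i => F (u, some i) := by
  rw [distMatrix_corona G H hG, sub_mulVec, add_mulVec, add_mulVec, dotProduct_sub,
    dotProduct_add, dotProduct_add, dotProduct_submatrix_fst_mulVec, dotProduct_vecMulVec_mulVec,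
    dotProduct_vecMulVec_mulVec, dotProduct_one_kronecker_mulVec]
  simp [dotProduct_zeroBorder_mulVec, one_dotProduct, dotProduct_one, hF, Function.comp_def]

end Corona

section

variable {V₁ V₂ : Type*} [Fintype V₁] [Fintype V₂] (G : SimpleGraph V₁) (H : SimpleGraph V₂)
  [DecidableEq V₂] [DecidableRel H.Adj]

lemma qec_corona_nonpos (hG : G.Connected) (hQ : QEC G ≤ 0)
    (hM : (H.adjMatrix ℝ + (2 : ℝ) • 1).PosSemidef) : QEC (corona G H) ≤ 0 := by
  classical
  refine Real.sSup_nonpos fun r ⟨F, _, hF, hr⟩ => ?_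
  rw [hr, Corona.dotProduct_distMatrix_corona_mulVec G H hG hF]
  set c := fun u => ∑ a, F (u, a)
  have hbase := dotProduct_mulVec_le_qec_mul G (c := c) (by rwa [← Fintype.sum_prod_type'])
  have hc : 0 ≤ c ⬝ᵥ c := by simpa using dotProduct_self_star_nonneg c
  have hcopies := Finset.sum_nonneg fun u (_ : u ∈ Finset.univ) => by
    simpa using hM.dotProduct_mulVec_nonneg fun i => F (u, some i)
  nlinarith

lemma qec_le_qec_corona [Nontrivial V₁] (hG : G.Connected) : QEC G ≤ QEC (corona G H) := by
  classical
  refine csSup_le_csSup (bddAbove_qecValues _) (qecValues_nonempty G) ?_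
  rintro _ ⟨f, hf1, hf0, rfl⟩
  set F : V₁ × Option V₂ → ℝ := fun p => p.2.elim (f p.1) fun _ => 0
  have hF : ∑ p, F p = 0 := by simpa [F, Fintype.sum_prod_type, Fintype.sum_option] using hf0
  refine ⟨F, by simpa [F, Fintype.sum_prod_type, Fintype.sum_option] using hf1, hF, ?_⟩
  rw [Corona.dotProduct_distMatrix_corona_mulVec G H hG hF]
  simp [F, Fintype.sum_option]

lemma qec_corona_nonneg_of_mulVec_eq_zero [Nonempty V₁] (hG : G.Connected) {x : V₂ → ℝ}
    (hx0 : x ≠ 0) (hx : (H.adjMatrix ℝ + (2 : ℝ) • 1) *ᵥ x = 0) (hsum : ∑ i, x i = 0) :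
    0 ≤ QEC (corona G H) := by
  classical
  obtain ⟨u₀⟩ := ‹Nonempty V₁›
  set F : V₁ × Option V₂ → ℝ := fun p => if p.1 = u₀ then p.2.elim 0 x else 0
  have hF : ∑ p, F p = 0 := by simp [F, Fintype.sum_prod_type, Fintype.sum_option, hsum]
  have hF0 : F ≠ 0 := fun h => hx0 (funext fun i => by simpa [F] using congrFun h (u₀, some i))
  have hbase : (fun u => ∑ a, F (u, a)) = 0 := by
    ext u
    by_cases hu : u = u₀ <;> simp [F, hu, Fintype.sum_option, hsum]
  have hcopy (u : V₁) : (fun i => F (u, some i)) = if u = u₀ then x else 0 := by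
    ext i
    by_cases hu : u = u₀ <;> simp [F, hu]
  have hval : F ⬝ᵥ distMatrix (corona G H) *ᵥ F = 0 := by
    rw [Corona.dotProduct_distMatrix_corona_mulVec G H hG hF, hbase]
    simp [hcopy, apply_ite, hx]
  have hzero := div_mem_qecValues (corona G H) hF0 hF
  rw [hval, zero_div] at hzero
  exact le_csSup (bddAbove_qecValues _) hzero

end

theorem qec_corona_eq_zero_general {V₁ V₂ : Type*} [Fintype V₁] [Fintype V₂]
    (G : SimpleGraph V₁) (hG : G.Connected) (hm : 2 ≤ Fintype.card V₁)
    (H : SimpleGraph V₂) [DecidableRel H.Adj] (κ : ℕ) (hreg : H.IsRegularOfDegree κ)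
    (μmin : ℝ)
    (hmin1 : ∃ x : V₂ → ℝ, x ≠ 0 ∧ (H.adjMatrix ℝ).mulVec x = μmin • x)
    (hmin2 : ∀ θ : ℝ, (∃ x : V₂ → ℝ, x ≠ 0 ∧ (H.adjMatrix ℝ).mulVec x = θ • x) → μmin ≤ θ)
    (h : (QEC G = 0 ∧ -2 ≤ μmin) ∨ (QEC G ≤ 0 ∧ μmin = -2)) :
    QEC (corona G H) = 0 := by
  classical
  have : Nontrivial V₁ := Fintype.one_lt_card_iff_nontrivial.mp hm
  obtain ⟨hQ, hμ⟩ : QEC G ≤ 0 ∧ -2 ≤ μmin := by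
    rcases h with ⟨h₁, h₂⟩ | ⟨h₁, h₂⟩ <;> exact ⟨by linarith, by linarith⟩
  have hM := (H.isHermitian_adjMatrix ℝ).posSemidef_add_smul_one (t := 2)
    fun θ hθ => hμ.trans (hmin2 θ hθ)
  refine le_antisymm (qec_corona_nonpos G H hG hQ hM) ?_
  rcases h with ⟨hQ0, -⟩ | ⟨-, rfl⟩
  · exact hQ0 ▸ qec_le_qec_corona G H hG
  · obtain ⟨x, hx0, hx⟩ := hmin1
    have hsum := hreg.sum_eq_zero_of_adjMatrix_mulVec_eq_smul
      (by linarith [κ.cast_nonneg (α := ℝ)] : (-2 : ℝ) < κ).ne hx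
    refine qec_corona_nonneg_of_mulVec_eq_zero G H hG hx0 ?_ hsum
    rw [add_mulVec, hx, smul_mulVec, one_mulVec, neg_smul, neg_add_cancel]

/-- If `QEC(G) = 0` and `min ev(A_H) ≥ −2`, then `QEC(G⊙H) = 0`;
also, if `QEC(G) ≤ 0` and `min ev(A_H) = −2`, then `QEC(G⊙H) = 0`. -/
theorem qec_corona_eq_zero {V₁ V₂ : Type*} [Fintype V₁] [Fintype V₂] [DecidableEq V₂]
    (G : SimpleGraph V₁) (hG : G.Connected) (hm : 2 ≤ Fintype.card V₁)
    (H : SimpleGraph V₂) [DecidableRel H.Adj] (κ : ℕ) (hreg : H.IsRegularOfDegree κ)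
    (μmin : ℝ)
    (hmin1 : ∃ x : V₂ → ℝ, x ≠ 0 ∧ (H.adjMatrix ℝ).mulVec x = μmin • x)
    (hmin2 : ∀ θ : ℝ, (∃ x : V₂ → ℝ, x ≠ 0 ∧ (H.adjMatrix ℝ).mulVec x = θ • x) → μmin ≤ θ)
    (h : (QEC G = 0 ∧ -2 ≤ μmin) ∨ (QEC G ≤ 0 ∧ μmin = -2)) :
    QEC (corona G H) = 0 :=
  qec_corona_eq_zero_general G hG hm H κ hreg μmin hmin1 hmin2 h
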